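/- arXiv:0906.0741 — 3 statements merged into one kernel-verified Lean document; each statement's English description precedes it below -/
import Mathlib

section
/- For every nonnegative integer p there exists a constant C_p > 0 such that for every entire function f : ℂ → ℂ with ∫_ℂ |f(z)|² e^{-|z|²} dz < ∞, one has for all z ∈ ℂ: |f^{(p)}(z)|² e^{-|z|²} ≤ C_p (1 + |z|^{2p}) ∫_ℂ |f(w)|² e^{-|w|²} dw. -/
/-!
Twisting `f` by `e^{|w|²/2 - w̄u}` gives an entire function `F` with
`|F(w)|² = |f(w)|² e^{-|w|²}` and `|F(u)|² = |f(u)|² e^{-|u|²} e^{|u-w|²}`. Averaging the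
subharmonic function `|F|²` over circles of radius `r < 1` around `w` and integrating in `r`
bounds `|f(w)|² e^{-|w|²}` by `e/π ‖f‖²`. Hence `|f|² ≤ e/π ‖f‖² e^{|z|² + 3}` on the circle of
radius `R = 1 / max 1 |z|` around `z`, and Cauchy's estimate `|f^{(p)}(z)| ≤ p! sup |f| / R^p`
gives the claim with `C_p = (p!)² e⁴ / π`.
-/

open MeasureTheory Metric Set Real
open scoped Nat

section CircleAverage

variable {E : Type*} [NormedAddCommGroup E] [NormedSpace ℝ E]

lemma setIntegral_Ioo_circleMap_eq_smul_circleAverage (g : ℂ → E) (c : ℂ) (r : ℝ) :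
    ∫ θ in Ioo (-π) π, g (circleMap c r θ) = (2 * π) • circleAverage g c r := by
  rw [circleAverage_eq_integral_add (-π), smul_inv_smul₀ two_pi_pos.ne',
    intervalIntegral.integral_comp_add_right (fun θ => g (circleMap c r θ)),
    intervalIntegral.integral_of_le (by linarith [pi_pos]), integral_Ioc_eq_integral_Ioo]
  ring_nf

lemma integral_ball_eq_integral_circleAverage {g : ℂ → E} (hg : Continuous g) (c : ℂ)
    {R : ℝ} (hR : 0 ≤ R) :
    ∫ u in ball c R, g u = ∫ r in 0..R, (2 * π * r) • circleAverage g c r := by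
  have hpolar : ∀ p ∈ polarCoord.target,
      p.1 • (ball c R).indicator g (c + Complex.polarCoord.symm p) =
        (Ioo 0 R ×ˢ univ).indicator (fun p : ℝ × ℝ => p.1 • g (circleMap c p.1 p.2)) p := by
    rintro ⟨r, θ⟩ ⟨hr, -⟩
    have hc : c + Complex.polarCoord.symm (r, θ) = circleMap c r θ := by
      simp [circleMap, Complex.exp_mul_I, ← Complex.ofReal_cos, ← Complex.ofReal_sin]
    have hmem : circleMap c r θ ∈ ball c R ↔ (r, θ) ∈ Ioo 0 R ×ˢ (univ : Set ℝ) := by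
      simp [dist_eq_norm, abs_of_pos (show (0 : ℝ) < r from hr), show (0 : ℝ) < r from hr]
    by_cases h : (r, θ) ∈ Ioo 0 R ×ˢ (univ : Set ℝ)
    · rw [hc, indicator_of_mem (hmem.2 h), indicator_of_mem h]
    · rw [hc, indicator_of_notMem (mt hmem.1 h), indicator_of_notMem h, smul_zero]
  have hint : IntegrableOn (fun p : ℝ × ℝ => p.1 • g (circleMap c p.1 p.2))
      (Ioo 0 R ×ˢ Ioo (-π) π) (volume.prod volume) :=
    ((by fun_prop : Continuous fun p : ℝ × ℝ => p.1 • g (circleMap c p.1 p.2)).continuousOn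
      |>.integrableOn_compact (isCompact_Icc.prod isCompact_Icc)).mono_set
      (prod_mono Ioo_subset_Icc_self Ioo_subset_Icc_self)
  calc ∫ u in ball c R, g u
      = ∫ u, (ball c R).indicator g (c + u) := by
        rw [integral_add_left_eq_self, integral_indicator measurableSet_ball]
    _ = ∫ p in Ioo 0 R ×ˢ Ioo (-π) π, p.1 • g (circleMap c p.1 p.2) := by
        rw [← Complex.integral_comp_polarCoord_symm,
          setIntegral_congr_fun polarCoord.open_target.measurableSet hpolar,
          setIntegral_indicator (measurableSet_Ioo.prod MeasurableSet.univ), polarCoord_target,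
          prod_inter_prod, Ioi_inter_Ioo, max_self, inter_univ]
    _ = ∫ r in 0..R, (2 * π * r) • circleAverage g c r := by
        rw [Measure.volume_eq_prod, setIntegral_prod _ hint, intervalIntegral.integral_of_le hR,
          integral_Ioc_eq_integral_Ioo]
        refine integral_congr_ae (Filter.Eventually.of_forall fun r => ?_)
        simp only [integral_smul, setIntegral_Ioo_circleMap_eq_smul_circleAverage, smul_smul]
        ring_nf

lemma norm_circleAverage_le (f : ℂ → E) (c : ℂ) (R : ℝ) :
    ‖circleAverage f c R‖ ≤ circleAverage (fun u => ‖f u‖) c R := by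
  rw [circleAverage, circleAverage, norm_smul, smul_eq_mul, norm_inv,
    Real.norm_of_nonneg two_pi_pos.le]
  gcongr
  exact intervalIntegral.norm_integral_le_integral_norm two_pi_pos.le

end CircleAverage

lemma mul_le_setIntegral_ball_of_le_circleAverage {g : ℂ → ℝ} (hg : Continuous g) {c : ℂ}
    {R m : ℝ} (hR : 0 ≤ R) (hm : ∀ r ∈ Ioo 0 R, m ≤ circleAverage g c r) :
    π * R ^ 2 * m ≤ ∫ u in ball c R, g u := by
  rw [integral_ball_eq_integral_circleAverage hg c hR]
  calc π * R ^ 2 * m = ∫ r in 0..R, (2 * π * r) * m := by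
        rw [intervalIntegral.integral_mul_const, intervalIntegral.integral_const_mul, integral_id]
        ring
    _ ≤ ∫ r in 0..R, (2 * π * r) • circleAverage g c r := by
        refine intervalIntegral.integral_mono_on_of_le_Ioo hR ?_ ?_ fun r hr => ?_
        · exact (by fun_prop : Continuous fun r : ℝ => 2 * π * r * m).intervalIntegrable _ _
        · exact (by fun_prop : Continuous fun r => (2 * π * r) • circleAverage g c r)
            |>.intervalIntegrable _ _
        · exact mul_le_mul_of_nonneg_left (hm r hr) (by nlinarith [pi_pos, hr.1])

lemma DiffContOnCl.sq_norm_le_circleAverage {g : ℂ → ℂ} {c : ℂ} {R : ℝ}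
    (hg : DiffContOnCl ℂ g (ball c |R|)) :
    ‖g c‖ ^ 2 ≤ Real.circleAverage (fun u => ‖g u‖ ^ 2) c R := by
  have hmean := (hg.smul hg).circleAverage
  simp only [smul_eq_mul] at hmean
  calc ‖g c‖ ^ 2 = ‖Real.circleAverage (fun u => g u * g u) c R‖ := by
        rw [hmean, norm_mul, sq]
    _ ≤ Real.circleAverage (fun u => ‖g u * g u‖) c R := norm_circleAverage_le _ c R
    _ = Real.circleAverage (fun u => ‖g u‖ ^ 2) c R := by simp only [norm_mul, sq]

lemma sq_norm_cexp_sub_conj_mul (w u : ℂ) :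
    ‖Complex.exp ((‖w‖ ^ 2 / 2 : ℝ) - starRingEnd ℂ w * u)‖ ^ 2 =
      Real.exp (‖u - w‖ ^ 2 - ‖u‖ ^ 2) := by
  rw [Complex.norm_exp, ← Real.exp_nat_mul]
  congr 1
  simp only [Complex.sq_norm, Complex.normSq_apply, Complex.sub_re, Complex.sub_im,
    Complex.ofReal_re, Complex.mul_re, Complex.conj_re, Complex.conj_im]
  push_cast
  ring

theorem sq_norm_mul_exp_le_integral {f : ℂ → ℂ} (hf : Differentiable ℂ f)
    (hint : Integrable fun u : ℂ => ‖f u‖ ^ 2 * Real.exp (-‖u‖ ^ 2)) (w : ℂ) :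
    ‖f w‖ ^ 2 * Real.exp (-‖w‖ ^ 2) ≤
      Real.exp 1 / π * ∫ u : ℂ, ‖f u‖ ^ 2 * Real.exp (-‖u‖ ^ 2) := by
  set g : ℂ → ℝ := fun u => ‖f u‖ ^ 2 * Real.exp (-‖u‖ ^ 2)
  have hg : Continuous g := by have := hf.continuous; fun_prop
  set F : ℂ → ℂ := fun u => Complex.exp ((‖w‖ ^ 2 / 2 : ℝ) - starRingEnd ℂ w * u) * f u
  have hF : Differentiable ℂ F := by fun_prop
  have hFg : ∀ u, ‖F u‖ ^ 2 = Real.exp (‖u - w‖ ^ 2) * g u := by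
    intro u
    rw [norm_mul, mul_pow, sq_norm_cexp_sub_conj_mul, sub_eq_add_neg, Real.exp_add]
    ring
  have hcircle : ∀ r ∈ Ioo 0 1, g w / Real.exp 1 ≤ circleAverage g w r := by
    intro r hr
    rw [div_le_iff₀' (Real.exp_pos 1)]
    have := hF.continuous
    calc g w = ‖F w‖ ^ 2 := by simp [hFg]
      _ ≤ circleAverage (fun u => ‖F u‖ ^ 2) w r := hF.diffContOnCl.sq_norm_le_circleAverage
      _ ≤ circleAverage (fun u => Real.exp 1 * g u) w r := by
          refine circleAverage_mono (Continuous.continuousOn (by fun_prop)).circleIntegrable'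
            (Continuous.continuousOn (by fun_prop)).circleIntegrable' fun u hu => ?_
          rw [hFg, mem_sphere_iff_norm.1 hu, sq_abs]
          gcongr
          nlinarith [hr.1, hr.2]
      _ = Real.exp 1 * circleAverage g w r := by
          simp only [← smul_eq_mul]
          exact circleAverage_fun_smul
  have hball := mul_le_setIntegral_ball_of_le_circleAverage hg zero_le_one hcircle
  have hle := setIntegral_le_integral (s := ball w 1) hint
    (Filter.Eventually.of_forall fun u => by positivity)
  have hpi := hball.trans hle
  rw [one_pow, mul_one, mul_div_assoc', div_le_iff₀ (Real.exp_pos 1)] at hpi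
  rw [div_mul_eq_mul_div, le_div_iff₀' pi_pos]
  linarith

lemma sq_norm_le_of_mem_sphere_inv_max {z u : ℂ} (hu : u ∈ sphere z (max 1 ‖z‖)⁻¹) :
    ‖u‖ ^ 2 ≤ ‖z‖ ^ 2 + 3 := by
  have hR1 : (max 1 ‖z‖)⁻¹ ≤ 1 := inv_le_one_of_one_le₀ (le_max_left _ _)
  have hRz : (max 1 ‖z‖)⁻¹ * ‖z‖ ≤ 1 :=
    inv_mul_le_one_of_le₀ (le_max_right _ _) (by positivity)
  have hu' : ‖u‖ ≤ ‖z‖ + (max 1 ‖z‖)⁻¹ := by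
    rw [← mem_sphere_iff_norm.1 hu]
    exact norm_le_norm_add_norm_sub' u z
  nlinarith [norm_nonneg u, norm_nonneg z, inv_nonneg.2 (zero_le_one.trans (le_max_left 1 ‖z‖))]

lemma max_one_pow_le_one_add_pow {t : ℝ} (ht : 0 ≤ t) (n : ℕ) :
    max 1 t ^ n ≤ 1 + t ^ n := by
  rcases le_total 1 t with h | h
  · rw [max_eq_right h]
    linarith
  · rw [max_eq_left h, one_pow]
    linarith [pow_nonneg ht n]

/-- Carlen's inequality: for every `p` there is a constant `C_p > 0` such that every
entire function `f` in the Bargmann space satisfies the pointwise bound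
`|f^{(p)}(z)|² e^{-|z|²} ≤ C_p (1 + |z|^{2p}) ‖f‖²`. -/
theorem carlen_inequality (p : ℕ) :
    ∃ C : ℝ, 0 < C ∧ ∀ f : ℂ → ℂ, Differentiable ℂ f →
      Integrable (fun z : ℂ => ‖f z‖ ^ 2 * Real.exp (-‖z‖ ^ 2)) →
      ∀ z : ℂ,
        ‖iteratedDeriv p f z‖ ^ 2 * Real.exp (-‖z‖ ^ 2) ≤
          C * (1 + ‖z‖ ^ (2 * p)) * ∫ w : ℂ, ‖f w‖ ^ 2 * Real.exp (-‖w‖ ^ 2) := by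
  refine ⟨(p ! : ℝ) ^ 2 * (Real.exp 4 / π), by positivity, fun f hf hint z => ?_⟩
  set I := ∫ w : ℂ, ‖f w‖ ^ 2 * Real.exp (-‖w‖ ^ 2)
  set R := (max 1 ‖z‖)⁻¹
  set M := Real.exp 1 / π * I * Real.exp (‖z‖ ^ 2 + 3)
  have hsphere : ∀ u ∈ sphere z R, ‖f u‖ ≤ √M := fun u hu => by
    refine Real.le_sqrt_of_sq_le ?_
    calc ‖f u‖ ^ 2 = ‖f u‖ ^ 2 * Real.exp (-‖u‖ ^ 2) * Real.exp (‖u‖ ^ 2) := by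
          rw [mul_assoc, ← Real.exp_add, neg_add_cancel, Real.exp_zero, mul_one]
      _ ≤ M := mul_le_mul (sq_norm_mul_exp_le_integral hf hint u)
          (Real.exp_le_exp.2 (sq_norm_le_of_mem_sphere_inv_max hu)) (by positivity)
          (mul_nonneg (by positivity) (integral_nonneg fun w => by positivity))
  have hcauchy := Complex.norm_iteratedDeriv_le_of_forall_mem_sphere_norm_le p (by positivity)
    hf.diffContOnCl hsphere
  calc ‖iteratedDeriv p f z‖ ^ 2 * Real.exp (-‖z‖ ^ 2)
      ≤ (p ! * √M / R ^ p) ^ 2 * Real.exp (-‖z‖ ^ 2) := by gcongr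
    _ = (p ! : ℝ) ^ 2 * (Real.exp 4 / π) * max 1 ‖z‖ ^ (2 * p) * I := by
        rw [div_pow, mul_pow, Real.sq_sqrt (by positivity), inv_pow, inv_pow, div_inv_eq_mul,
          ← pow_mul, mul_comm p 2, show (4 : ℝ) = 1 + (‖z‖ ^ 2 + 3) + -‖z‖ ^ 2 by ring,
          Real.exp_add, Real.exp_add]
        ring
    _ ≤ (p ! : ℝ) ^ 2 * (Real.exp 4 / π) * (1 + ‖z‖ ^ (2 * p)) * I := by
        gcongr
        exact max_one_pow_le_one_add_pow (norm_nonneg z) _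
end

section
/- Every function f in the Bargmann space B₁ satisfies the coherent state reproducing formula: for all z ∈ ℂ, f(z) = π^{-1} ∫_ℂ f(ξ) e^{\bar{ξ} z} e^{-|ξ|²} dξ. -/
/-!
After the substitution `ξ = w + z` the integrand becomes `g w * exp (-‖w‖²)` with
`g w = f (w + z) * exp (-z̄ w)` entire and `g 0 = f z`. In polar coordinates the mean value
property on each circle turns `∫ g w * exp (-‖w‖²)` into `g 0 * 2π ∫₀^∞ r exp (-r²) dr = π g 0`.
The integrand is integrable by Cauchy–Schwarz (in AM–GM form) against the coherent state
`ξ ↦ exp (ξ̄ z)`, whose weighted square norm is a translated Gaussian.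
-/

open MeasureTheory Complex Real Set
open scoped ComplexConjugate

theorem integrableOn_polarCoord_target_smul_comp_symm {E : Type*} [NormedAddCommGroup E]
    [NormedSpace ℝ E] {f : ℝ × ℝ → E} (hf : Integrable f) :
    IntegrableOn (fun p : ℝ × ℝ => p.1 • f (polarCoord.symm p)) polarCoord.target := by
  have hderiv : ∀ p ∈ polarCoord.target,
      HasFDerivWithinAt polarCoord.symm (fderivPolarCoordSymm p) polarCoord.target p :=
    fun p _ => (hasFDerivAt_polarCoord_symm p).hasFDerivWithinAt
  have himage := (integrableOn_image_iff_integrableOn_abs_det_fderiv_smul volume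
    polarCoord.open_target.measurableSet hderiv polarCoord.symm.injOn f).mp
  rw [polarCoord.symm_image_target_eq_source] at himage
  refine (himage hf.integrableOn).congr_fun (fun p hp => ?_) polarCoord.open_target.measurableSet
  simp only [det_fderivPolarCoordSymm, abs_of_pos (show 0 < p.1 from hp.1)]

theorem Complex.integrableOn_polarCoord_target_smul_comp_symm {E : Type*} [NormedAddCommGroup E]
    [NormedSpace ℝ E] {f : ℂ → E} (hf : Integrable f) :
    IntegrableOn (fun p : ℝ × ℝ => p.1 • f (Complex.polarCoord.symm p)) polarCoord.target :=
  _root_.integrableOn_polarCoord_target_smul_comp_symm <|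
    (volume_preserving_equiv_real_prod.symm.integrable_comp_emb
      measurableEquivRealProd.symm.measurableEmbedding).mpr hf

theorem Complex.polarCoord_symm_eq_circleMap (p : ℝ × ℝ) :
    Complex.polarCoord.symm p = circleMap 0 p.1 p.2 := by
  simp [circleMap, Complex.exp_mul_I]

theorem integral_Ioo_neg_pi_pi_circleMap {E : Type*} [NormedAddCommGroup E] [NormedSpace ℝ E]
    (f : ℂ → E) (r : ℝ) :
    ∫ θ in Ioo (-π) π, f (circleMap 0 r θ) = (2 * π) • circleAverage f 0 r := by
  have hperiodic := ((periodic_circleMap 0 r).comp f).intervalIntegral_add_eq (-π) 0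
  rw [show -π + 2 * π = π by ring, zero_add] at hperiodic
  rw [← integral_Ioc_eq_integral_Ioo, ← intervalIntegral.integral_of_le (by linarith [pi_pos]),
    ← Function.comp_def, hperiodic, circleAverage_def, smul_smul, mul_inv_cancel₀ (by positivity),
    one_smul]
  rfl

theorem integral_eq_integral_Ioi_smul_circleAverage {E : Type*} [NormedAddCommGroup E]
    [NormedSpace ℝ E] {f : ℂ → E} (hf : Integrable f) :
    ∫ w, f w = ∫ r in Ioi 0, (2 * π * r) • circleAverage f 0 r := by
  have hpolar := Complex.integrableOn_polarCoord_target_smul_comp_symm hf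
  simp only [Complex.polarCoord_symm_eq_circleMap] at hpolar
  rw [← Complex.integral_comp_polarCoord_symm]
  simp only [Complex.polarCoord_symm_eq_circleMap]
  rw [polarCoord_target, Measure.volume_eq_prod] at hpolar ⊢
  rw [setIntegral_prod _ hpolar]
  refine setIntegral_congr_fun measurableSet_Ioi fun r _ => ?_
  rw [integral_smul, integral_Ioo_neg_pi_pi_circleMap, smul_smul, mul_comm r]

theorem Differentiable.integral_mul_radial {g : ℂ → ℂ} (hg : Differentiable ℂ g) {ρ : ℝ → ℂ}
    (hi : Integrable (fun w => g w * ρ ‖w‖)) :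
    ∫ w, g w * ρ ‖w‖ = 2 * π * g 0 * ∫ r in Ioi 0, r * ρ r := by
  rw [integral_eq_integral_Ioi_smul_circleAverage hi, ← integral_const_mul]
  refine setIntegral_congr_fun measurableSet_Ioi fun r hr => ?_
  have hsphere : EqOn (fun w => g w * ρ ‖w‖) (ρ r • g) (Metric.sphere 0 |r|) := fun w hw => by
    rw [mem_sphere_zero_iff_norm, abs_of_pos hr] at hw
    simp [hw, mul_comm]
  rw [circleAverage_congr_sphere hsphere, circleAverage_smul, hg.diffContOnCl.circleAverage]
  simp only [real_smul, smul_eq_mul]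
  push_cast
  ring

theorem Differentiable.integral_mul_exp_neg_norm_sq {g : ℂ → ℂ} (hg : Differentiable ℂ g)
    (hi : Integrable (fun w => g w * (rexp (-‖w‖ ^ 2) : ℂ))) :
    ∫ w, g w * (rexp (-‖w‖ ^ 2) : ℂ) = π * g 0 := by
  have hgauss : ∫ r in Ioi (0 : ℝ), (r : ℂ) * (rexp (-r ^ 2) : ℂ) = 2⁻¹ := by
    simpa using integral_mul_cexp_neg_mul_sq (b := 1) one_pos
  rw [hg.integral_mul_radial (ρ := fun r => (rexp (-r ^ 2) : ℂ)) hi, hgauss]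
  ring

theorem integrable_mul_mul_of_integrable_sq_norm_mul {α : Type*} [MeasurableSpace α]
    {μ : Measure α} {f g : α → ℂ} {w : α → ℝ} (hw : ∀ x, 0 ≤ w x)
    (hm : AEStronglyMeasurable (fun x => f x * g x * (w x : ℂ)) μ)
    (hf : Integrable (fun x => ‖f x‖ ^ 2 * w x) μ) (hg : Integrable (fun x => ‖g x‖ ^ 2 * w x) μ) :
    Integrable (fun x => f x * g x * (w x : ℂ)) μ := by
  refine ((hf.add hg).div_const 2).mono' hm (ae_of_all _ fun x => ?_)
  rw [norm_mul, norm_mul, norm_real, Real.norm_of_nonneg (hw x)]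
  simp only [Pi.add_apply]
  nlinarith [mul_nonneg (sq_nonneg (‖f x‖ - ‖g x‖)) (hw x)]

theorem integrable_sq_norm_cexp_conj_mul_mul_exp_neg_norm_sq (z : ℂ) :
    Integrable (fun ξ : ℂ => ‖cexp (conj ξ * z)‖ ^ 2 * rexp (-‖ξ‖ ^ 2)) := by
  refine (GaussianFourier.integrable_cexp_neg_mul_sq_norm_add (b := 1) one_pos 2 z).norm.congr
    (ae_of_all _ fun ξ => ?_)
  dsimp only
  rw [norm_exp, norm_exp, ← Real.exp_nat_mul, ← Real.exp_add, Complex.inner]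
  congr 1
  simp [← ofReal_pow]
  ring

theorem cexp_conj_mul_mul_exp_neg_norm_sq_add (w z : ℂ) :
    cexp (conj (w + z) * z) * (rexp (-‖w + z‖ ^ 2) : ℂ) =
      cexp (-conj z * w) * (rexp (-‖w‖ ^ 2) : ℂ) := by
  simp only [ofReal_exp, ← Complex.exp_add, ofReal_neg, ofReal_pow, ← mul_conj']
  congr 1
  simp only [map_add]
  ring

/-- Coherent state reproducing formula on the Bargmann space `B₁`:
`f(z) = π⁻¹ ∫ f(ξ) e^{ξ̄ z} e^{-|ξ|²} dξ`. -/
theorem coherent_state_representation (f : ℂ → ℂ) (hf : Differentiable ℂ f)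
    (hint : Integrable (fun z : ℂ => ‖f z‖ ^ 2 * Real.exp (-‖z‖ ^ 2))) (z : ℂ) :
    f z = (Real.pi : ℂ)⁻¹ *
      ∫ ξ : ℂ, f ξ * Complex.exp ((starRingEnd ℂ) ξ * z) * (Real.exp (-‖ξ‖ ^ 2) : ℂ) := by
  have hcont : Continuous (fun ξ : ℂ => f ξ * cexp (conj ξ * z) * (rexp (-‖ξ‖ ^ 2) : ℂ)) := by
    have hf_cont := hf.continuous
    fun_prop
  have hintegrable := integrable_mul_mul_of_integrable_sq_norm_mul (fun ξ => (exp_pos _).le)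
    hcont.aestronglyMeasurable hint (integrable_sq_norm_cexp_conj_mul_mul_exp_neg_norm_sq z)
  set g : ℂ → ℂ := fun w => f (w + z) * cexp (-conj z * w)
  have hshift : ∀ w, f (w + z) * cexp (conj (w + z) * z) * (rexp (-‖w + z‖ ^ 2) : ℂ)
      = g w * (rexp (-‖w‖ ^ 2) : ℂ) := fun w => by
    rw [mul_assoc, cexp_conj_mul_mul_exp_neg_norm_sq_add, ← mul_assoc]
  have hg : Differentiable ℂ g := by fun_prop
  have hgi : Integrable (fun w => g w * (rexp (-‖w‖ ^ 2) : ℂ)) := by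
    simpa only [hshift] using hintegrable.comp_add_right z
  rw [← integral_add_right_eq_self _ z]
  simp only [hshift]
  rw [hg.integral_mul_exp_neg_norm_sq hgi]
  simp [g, ofReal_ne_zero.mpr pi_ne_zero]
end

section
/- Let N ≥ 2, ω > 0, a > 0 and κ = a/(Nω). The LLL ground state energy E^LLL_N(ω,a) := inf spec(ω L_N + 4πa Δ_N) on B_N satisfies E^LLL_N(ω,a) ≤ aN · min{1/κ, √(2/π) N}. -/
open MeasureTheory

noncomputable section

def BNinner (N : ℕ) (F G : (Fin N → ℂ) → ℂ) : ℂ :=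
  ∫ v : Fin N → ℂ, (starRingEnd ℂ) (F v) * G v * (Real.exp (-∑ j, ‖v j‖ ^ 2) : ℂ)

def Lop (N : ℕ) (F : (Fin N → ℂ) → ℂ) : (Fin N → ℂ) → ℂ := fun z =>
  ∑ j, z j * fderiv ℂ F z (Pi.single j 1)

def deltaij (N : ℕ) (i j : Fin N) (F : (Fin N → ℂ) → ℂ) : (Fin N → ℂ) → ℂ := fun z =>
  (((2 * Real.pi) ^ ((3 : ℝ) / 2))⁻¹ : ℝ) *
    F (Function.update (Function.update z i ((z i + z j) / 2)) j ((z i + z j) / 2))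

def DeltaOp (N : ℕ) (F : (Fin N → ℂ) → ℂ) : (Fin N → ℂ) → ℂ := fun z =>
  ∑ p ∈ Finset.univ.filter (fun p : Fin N × Fin N => p.1 < p.2), deltaij N p.1 p.2 F z

def MemBN (N : ℕ) (F : (Fin N → ℂ) → ℂ) : Prop :=
  Differentiable ℂ F ∧ (∀ σ : Equiv.Perm (Fin N), ∀ v : Fin N → ℂ, F (v ∘ σ) = F v) ∧
    Integrable (fun v : Fin N → ℂ => ‖F v‖ ^ 2 * Real.exp (-∑ j, ‖v j‖ ^ 2))

/-- The LLL ground state energy `E^LLL_N(ω,a) = inf spec (ω L_N + 4πa Δ_N)` on `B_N`,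
defined as the infimum of Rayleigh quotients. -/
def ELLL (N : ℕ) (ω a : ℝ) : ℝ :=
  sInf {r : ℝ | ∃ F : (Fin N → ℂ) → ℂ, MemBN N F ∧ 0 < (BNinner N F F).re ∧
    r = (ω * (BNinner N F (Lop N F)).re + 4 * Real.pi * a * (BNinner N F (DeltaOp N F)).re) /
        (BNinner N F F).re}

/-! Both bounds are variational. A symmetric entire function of finite Bargmann norm that is a
common eigenfunction of `L_N` and `Δ_N` bounds `E^LLL_N` by its Rayleigh quotient. The Laughlin
state is homogeneous of degree `N(N-1)` (Euler's identity) and vanishes wherever two coordinates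
coincide, which is exactly where `δ_ij` evaluates it, so its energy is `ω N(N-1) ≤ aN/κ`. The
constant function is killed by `L_N` and `Δ_N 1 = (2π)^{-3/2} N(N-1)/2`, so its energy is
`a √(2/π) N(N-1)/2 ≤ aN √(2/π) N`. -/

open Finset

lemma Real.pow_mul_exp_neg_le (d : ℕ) {x : ℝ} (hx : 0 ≤ x) :
    x ^ d * Real.exp (-x) ≤ 2 ^ d * d.factorial * Real.exp (-(1 / 2) * x) := by
  have h := Real.pow_div_factorial_le_exp (x := x / 2) (by linarith) d
  rw [div_le_iff₀ (by positivity), div_pow] at h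
  calc x ^ d * Real.exp (-x) = 2 ^ d * (x ^ d / 2 ^ d) * Real.exp (-x) := by field_simp
    _ ≤ 2 ^ d * (Real.exp (x / 2) * d.factorial) * Real.exp (-x) := by gcongr
    _ = 2 ^ d * d.factorial * (Real.exp (x / 2) * Real.exp (-x)) := by ring
    _ = 2 ^ d * d.factorial * Real.exp (-(1 / 2) * x) := by rw [← Real.exp_add]; ring_nf

lemma integrable_exp_neg_mul_sum_norm_sq (N : ℕ) {b : ℝ} (hb : 0 < b) :
    Integrable (fun v : Fin N → ℂ => Real.exp (-b * ∑ j, ‖v j‖ ^ 2)) := by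
  have hC : Integrable (fun z : ℂ => Real.exp (-b * ‖z‖ ^ 2)) := by
    have h := (GaussianFourier.integrable_cexp_neg_mul_sq_norm_add (V := ℂ) (b := (b : ℂ))
      (by simpa using hb) 0 0).norm
    refine h.congr (.of_forall fun z => ?_)
    simp [Complex.norm_exp, ← Complex.ofReal_pow]
  simp_rw [mul_sum, Real.exp_sum]
  exact Integrable.fintype_prod fun _ => hC

lemma integrable_norm_sq_mul_gaussian_of_le {N d : ℕ} {F : (Fin N → ℂ) → ℂ} {C : ℝ}
    (hF : Continuous F) (hC : 0 ≤ C) (hbound : ∀ v, ‖F v‖ ^ 2 ≤ C * (∑ j, ‖v j‖ ^ 2) ^ d) :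
    Integrable (fun v : Fin N → ℂ => ‖F v‖ ^ 2 * Real.exp (-∑ j, ‖v j‖ ^ 2)) := by
  refine ((integrable_exp_neg_mul_sum_norm_sq N one_half_pos).const_mul
    (C * 2 ^ d * d.factorial)).mono' (by fun_prop) (.of_forall fun v => ?_)
  have hS : 0 ≤ ∑ j, ‖v j‖ ^ 2 := by positivity
  rw [Real.norm_of_nonneg (by positivity)]
  calc ‖F v‖ ^ 2 * Real.exp (-∑ j, ‖v j‖ ^ 2)
      ≤ C * ((∑ j, ‖v j‖ ^ 2) ^ d * Real.exp (-∑ j, ‖v j‖ ^ 2)) := by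
        rw [← mul_assoc]
        exact mul_le_mul_of_nonneg_right (hbound v) (Real.exp_pos _).le
    _ ≤ C * (2 ^ d * d.factorial * Real.exp (-(1 / 2) * ∑ j, ‖v j‖ ^ 2)) :=
        mul_le_mul_of_nonneg_left (Real.pow_mul_exp_neg_le d hS) hC
    _ = _ := by ring

lemma BNinner_self (N : ℕ) (F : (Fin N → ℂ) → ℂ) :
    BNinner N F F = ((∫ v, ‖F v‖ ^ 2 * Real.exp (-∑ j, ‖v j‖ ^ 2) : ℝ) : ℂ) := by
  rw [BNinner, ← integral_complex_ofReal]
  congr 1 with v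
  rw [Complex.conj_mul', Complex.ofReal_mul, Complex.ofReal_pow]

lemma BNinner_eq_mul_of_eq_mul {N : ℕ} {F G : (Fin N → ℂ) → ℂ} {c : ℂ}
    (h : ∀ z, G z = c * F z) : BNinner N F G = c * BNinner N F F := by
  rw [BNinner, BNinner, ← integral_const_mul]
  congr 1 with v
  rw [h]
  ring

lemma BNinner_self_re_pos {N : ℕ} {F : (Fin N → ℂ) → ℂ} (hF : Continuous F)
    (hint : Integrable (fun v : Fin N → ℂ => ‖F v‖ ^ 2 * Real.exp (-∑ j, ‖v j‖ ^ 2)))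
    {v₀ : Fin N → ℂ} (hv₀ : F v₀ ≠ 0) : 0 < (BNinner N F F).re := by
  rw [BNinner_self, Complex.ofReal_re]
  exact integral_pos_of_integrable_nonneg_nonzero (by fun_prop) hint (fun v => by positivity)
    (x := v₀) (by positivity)

/-- The hypothesis `0 ≤ b` covers the case of `s` unbounded below, where `sInf s = 0`. -/
lemma Real.sInf_le_of_mem_of_nonneg {s : Set ℝ} {r b : ℝ} (hr : r ∈ s) (hrb : r ≤ b)
    (hb : 0 ≤ b) : sInf s ≤ b := by
  by_cases hs : BddBelow s
  · exact (csInf_le hs hr).trans hrb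
  · rwa [Real.sInf_of_not_bddBelow hs]

lemma ELLL_le_of_eigenfunction {N : ℕ} {ω a l δ b : ℝ} {F : (Fin N → ℂ) → ℂ} (hF : MemBN N F)
    (hpos : 0 < (BNinner N F F).re) (hL : ∀ z, Lop N F z = l * F z)
    (hΔ : ∀ z, DeltaOp N F z = δ * F z) (hb : ω * l + 4 * Real.pi * a * δ ≤ b) (hb0 : 0 ≤ b) :
    ELLL N ω a ≤ b := by
  refine Real.sInf_le_of_mem_of_nonneg ⟨F, hF, hpos, rfl⟩ (le_of_eq_of_le ?_ hb) hb0
  rw [BNinner_eq_mul_of_eq_mul hL, BNinner_eq_mul_of_eq_mul hΔ, Complex.re_ofReal_mul,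
    Complex.re_ofReal_mul]
  field_simp

lemma fderiv_apply_eq_sum {N : ℕ} (F : (Fin N → ℂ) → ℂ) (z : Fin N → ℂ) :
    fderiv ℂ F z z = ∑ j, z j * fderiv ℂ F z (Pi.single j 1) := by
  calc fderiv ℂ F z z = fderiv ℂ F z (∑ j, Pi.single j (z j)) := by rw [univ_sum_single]
    _ = _ := map_sum _ _ _
  refine sum_congr rfl fun j _ => ?_
  rw [← smul_eq_mul, ← map_smul, ← Pi.single_smul', smul_eq_mul, mul_one]

lemma Lop_eq_of_homogeneous {N d : ℕ} {F : (Fin N → ℂ) → ℂ} (hF : Differentiable ℂ F)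
    (hhom : ∀ (t : ℂ) z, F (t • z) = t ^ d * F z) (z : Fin N → ℂ) : Lop N F z = d * F z := by
  have hray : HasDerivAt (fun t : ℂ => F (t • z)) (fderiv ℂ F z z) 1 := by
    have hsmul : HasDerivAt (fun t : ℂ => t • z) z 1 := by
      simpa using (hasDerivAt_id (1 : ℂ)).smul_const z
    have hFz : HasFDerivAt F (fderiv ℂ F z) ((1 : ℂ) • z) := by
      rw [one_smul]
      exact (hF z).hasFDerivAt
    exact hFz.comp_hasDerivAt 1 hsmul
  have hpow : HasDerivAt (fun t : ℂ => F (t • z)) (d * F z) 1 := by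
    simpa [hhom] using (hasDerivAt_pow d (1 : ℂ)).mul_const (F z)
  rw [Lop, ← fderiv_apply_eq_sum, hray.unique hpow]

/-- The Laughlin state `∏_{i<j} (z_i - z_j) ^ 2`, up to the sign `(-1) ^ (N (N - 1) / 2)`. -/
def laughlin (N : ℕ) (z : Fin N → ℂ) : ℂ :=
  ∏ p ∈ (univ : Finset (Fin N)).offDiag, (z p.1 - z p.2)

namespace laughlin

variable {N : ℕ}

lemma differentiable : Differentiable ℂ (laughlin N) := by
  unfold laughlin
  fun_prop

lemma comp_perm (σ : Equiv.Perm (Fin N)) (z : Fin N → ℂ) : laughlin N (z ∘ σ) = laughlin N z :=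
  prod_equiv (σ.prodCongr σ) (by simp) (by simp)

lemma smul (t : ℂ) (z : Fin N → ℂ) :
    laughlin N (t • z) = t ^ (N * N - N) * laughlin N z := by
  simp only [laughlin, Pi.smul_apply, smul_eq_mul, ← mul_sub, prod_mul_distrib, prod_const,
    offDiag_card, card_univ, Fintype.card_fin]

lemma eq_zero_of_eq {z : Fin N → ℂ} {i j : Fin N} (hij : i ≠ j) (h : z i = z j) :
    laughlin N z = 0 :=
  prod_eq_zero (i := (i, j)) (mem_offDiag.2 ⟨mem_univ _, mem_univ _, hij⟩) (sub_eq_zero.2 h)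

lemma norm_sq_le (v : Fin N → ℂ) :
    ‖laughlin N v‖ ^ 2 ≤ 2 ^ (N * N - N) * (∑ j, ‖v j‖ ^ 2) ^ (N * N - N) := by
  have hpair (i j : Fin N) (hij : i ≠ j) : ‖v i - v j‖ ^ 2 ≤ 2 * ∑ j, ‖v j‖ ^ 2 := by
    have hsum : ‖v i‖ ^ 2 + ‖v j‖ ^ 2 ≤ ∑ j, ‖v j‖ ^ 2 := by
      rw [← sum_pair hij (f := fun k => ‖v k‖ ^ 2)]
      exact sum_le_univ_sum_of_nonneg fun _ => by positivity
    nlinarith [norm_sub_le (v i) (v j), norm_nonneg (v i - v j), sq_nonneg (‖v i‖ - ‖v j‖)]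
  calc ‖laughlin N v‖ ^ 2 = ∏ p ∈ (univ : Finset (Fin N)).offDiag, ‖v p.1 - v p.2‖ ^ 2 := by
        rw [laughlin, norm_prod, prod_pow]
    _ ≤ ∏ _p ∈ (univ : Finset (Fin N)).offDiag, 2 * ∑ j, ‖v j‖ ^ 2 :=
        prod_le_prod (fun _ _ => by positivity) fun p hp => hpair p.1 p.2 (mem_offDiag.1 hp).2.2
    _ = _ := by rw [prod_const, offDiag_card, card_univ, Fintype.card_fin, mul_pow]

lemma ne_zero_at_coe : laughlin N (fun j => (j : ℂ)) ≠ 0 :=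
  prod_ne_zero_iff.2 fun _ hp => sub_ne_zero.2 fun h =>
    (mem_offDiag.1 hp).2.2 (Fin.ext (Nat.cast_injective h))

lemma DeltaOp_eq_zero (z : Fin N → ℂ) : DeltaOp N (laughlin N) z = 0 := by
  refine sum_eq_zero fun p hp => ?_
  have hne : p.1 ≠ p.2 := (mem_filter.1 hp).2.ne
  rw [deltaij, eq_zero_of_eq hne (by simp [Function.update_of_ne hne]), mul_zero]

lemma memBN : MemBN N (laughlin N) :=
  ⟨differentiable, comp_perm, integrable_norm_sq_mul_gaussian_of_le differentiable.continuous
    (pow_nonneg zero_le_two _) norm_sq_le⟩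

end laughlin

lemma Lop_const (N : ℕ) (c : ℂ) (z : Fin N → ℂ) : Lop N (fun _ => c) z = 0 := by
  simp [Lop]

lemma DeltaOp_const (N : ℕ) (c : ℂ) (z : Fin N → ℂ) :
    DeltaOp N (fun _ => c) z = (N.choose 2 * ((2 * Real.pi) ^ ((3 : ℝ) / 2))⁻¹ : ℝ) * c := by
  have hcard : #{p : Fin N × Fin N | p.1 < p.2} = N.choose 2 := by
    rw [← univ_product_univ, card_product_filter_lt, card_univ, Fintype.card_fin]
  simp only [DeltaOp, deltaij, sum_const, hcard, nsmul_eq_mul]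
  push_cast
  ring

lemma memBN_const (N : ℕ) (c : ℂ) : MemBN N (fun _ => c) :=
  ⟨differentiable_const c, fun _ _ => rfl,
    integrable_norm_sq_mul_gaussian_of_le (d := 0) continuous_const (sq_nonneg ‖c‖) (by simp)⟩

lemma four_mul_pi_mul_inv_two_pi_rpow :
    4 * Real.pi * ((2 * Real.pi) ^ ((3 : ℝ) / 2))⁻¹ = √(2 / Real.pi) := by
  have hπ := Real.pi_pos
  have hcube : ((2 * Real.pi) ^ ((3 : ℝ) / 2)) ^ 2 = (2 * Real.pi) ^ 3 := by
    rw [← Real.rpow_natCast, ← Real.rpow_mul (by positivity)]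
    norm_num
  rw [eq_comm, Real.sqrt_eq_iff_mul_self_eq_of_pos (by positivity), ← sq, mul_pow, inv_pow, hcube]
  field_simp
  ring

lemma ELLL_le_of_laughlin {N : ℕ} {ω : ℝ} (a : ℝ) (hω : 0 ≤ ω) :
    ELLL N ω a ≤ ω * (N * N - N : ℕ) :=
  ELLL_le_of_eigenfunction (δ := 0) laughlin.memBN
    (BNinner_self_re_pos laughlin.differentiable.continuous laughlin.memBN.2.2
      laughlin.ne_zero_at_coe)
    (fun z => by
      rw [Lop_eq_of_homogeneous laughlin.differentiable laughlin.smul, Complex.ofReal_natCast])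
    (fun z => by rw [laughlin.DeltaOp_eq_zero, Complex.ofReal_zero, zero_mul])
    (by simp) (by positivity)

lemma ELLL_le_of_const {N : ℕ} (ω : ℝ) {a : ℝ} (ha : 0 ≤ a) :
    ELLL N ω a ≤ a * √(2 / Real.pi) * N.choose 2 :=
  ELLL_le_of_eigenfunction (memBN_const N 1)
    (BNinner_self_re_pos continuous_const (memBN_const N 1).2.2 (v₀ := 0) one_ne_zero)
    (fun z => by rw [Lop_const, Complex.ofReal_zero, zero_mul])
    (DeltaOp_const N 1) (le_of_eq (by rw [← four_mul_pi_mul_inv_two_pi_rpow]; ring))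
    (by positivity)

theorem ELLL_upper_bound_general (N : ℕ) (ω a : ℝ) (hω : 0 < ω) (ha : 0 < a) :
    ELLL N ω a ≤ a * N * min (a / (N * ω))⁻¹ (Real.sqrt (2 / Real.pi) * N) := by
  have hκ : a * N * (a / (N * ω))⁻¹ = ω * N ^ 2 := by
    rw [inv_div]
    field_simp
  rw [mul_min_of_nonneg _ _ (by positivity), hκ]
  refine le_min ((ELLL_le_of_laughlin a hω.le).trans ?_) ((ELLL_le_of_const ω ha.le).trans ?_)
  · gcongr
    exact_mod_cast (Nat.sub_le _ _).trans_eq (sq N).symm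
  · have hchoose : (N.choose 2 : ℝ) ≤ N ^ 2 := by exact_mod_cast Nat.choose_le_pow N 2
    calc a * √(2 / Real.pi) * N.choose 2 ≤ a * √(2 / Real.pi) * N ^ 2 := by gcongr
      _ = a * N * (√(2 / Real.pi) * N) := by ring

/-- Simple upper bound: `E^LLL_N(ω,a) ≤ aN min{1/κ, √(2/π) N}` with `κ = a/(Nω)`. -/
theorem ELLL_upper_bound (N : ℕ) (hN : 2 ≤ N) (ω a : ℝ) (hω : 0 < ω) (ha : 0 < a) :
    ELLL N ω a ≤ a * N * min (a / (N * ω))⁻¹ (Real.sqrt (2 / Real.pi) * N) :=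
  ELLL_upper_bound_general N ω a hω ha

end
end
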